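/- Let ρ be a separable bipartite density matrix on ℂ^{d_A}⊗ℂ^{d_B}, and take the (non-identity) Heisenberg–Weyl operators (so κ_A = d_A, κ_B = d_B) as the traceless orthogonal bases. Then for all real x, y ≥ 0 and every positive integer n, the normalized extended correlation tensor satisfies ‖M̂_{x,y}^{(n)}‖_tr ≤ √( (n x² + d_A − 1)(n y² + d_B − 1) ). -/

import Mathlib

open Matrix BigOperators Kronecker
open scoped ComplexOrder

/-- The trace norm (sum of singular values) of a complex matrix. -/
noncomputable def traceNorm {m k : Type*} [Fintype m] [Fintype k] [DecidableEq k]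
    (X : Matrix m k ℂ) : ℝ :=
  ∑ i, Real.sqrt ((Matrix.isHermitian_conjTranspose_mul_self X).eigenvalues i)

/-- A density matrix: positive semidefinite with trace one. -/
def IsDensityMatrix {d : Type*} [Fintype d] [DecidableEq d] (ρ : Matrix d d ℂ) : Prop :=
  ρ.PosSemidef ∧ ρ.trace = 1

/-- Separability of a bipartite state. -/
def IsSeparableState (dA dB : ℕ)
    (ρ : Matrix (Fin dA × Fin dB) (Fin dA × Fin dB) ℂ) : Prop :=
  ∃ (N : ℕ) (p : Fin N → ℝ) (ρA : Fin N → Matrix (Fin dA) (Fin dA) ℂ)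
    (ρB : Fin N → Matrix (Fin dB) (Fin dB) ℂ),
    (∀ i, 0 ≤ p i) ∧ (∑ i, p i) = 1 ∧
    (∀ i, IsDensityMatrix (ρA i)) ∧ (∀ i, IsDensityMatrix (ρB i)) ∧
    ρ = ∑ i, (p i : ℂ) • (ρA i ⊗ₖ ρB i)

/-- The Heisenberg–Weyl operator `W(l,m) = Σ_k exp(2πikl/d) |k⟩⟨(k+m) mod d|` on `ℂ^d`. -/
noncomputable def heisenbergWeyl (d : ℕ) (l m : ℕ) : Matrix (Fin d) (Fin d) ℂ :=
  Matrix.of fun i j =>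
    if (j : ℕ) = ((i : ℕ) + m) % d then
      Complex.exp (2 * Real.pi * Complex.I * (i : ℕ) * l / d) else 0

/-- The index set of non-identity Heisenberg–Weyl operators: pairs `(l,m) ≠ (0,0)`. -/
def HWIdx (d : ℕ) : Type := {p : Fin d × Fin d // (p.1 : ℕ) ≠ 0 ∨ (p.2 : ℕ) ≠ 0}

instance (d : ℕ) : Fintype (HWIdx d) := Subtype.fintype _
instance (d : ℕ) : DecidableEq (HWIdx d) := Subtype.instDecidableEq

/-!
Write `ρ = ∑ₜ pₜ ρᴬₜ ⊗ ρᴮₜ` and let `aₜ i = Tr(ρᴬₜ Wᵢᴴ)`, `bₜ j = Tr(ρᴮₜ Wⱼᴴ)` be the local Bloch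
vectors. The identity together with the operators `Wᵢ` is orthogonal with `Tr(W W'ᴴ) = d δ`, so
pairing the Bloch expansion and the separable decomposition of `ρ` with `Wᵢᴴ ⊗ Wⱼᴴ` gives
`r = ∑ₜ pₜ aₜ`, `s = ∑ₜ pₜ bₜ` and `T = ∑ₜ pₜ aₜ bₜᵀ`. Hence `M̂ = ∑ₜ pₜ (x𝟙ₙ, aₜ)(y𝟙ₙ, bₜ)ᵀ = Aᴴ B`,
where the rows of `A` and `B` are `√pₜ (x𝟙ₙ, aₜ)*` and `√pₜ (y𝟙ₙ, bₜ)`, and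
`‖Aᴴ B‖_tr ≤ ‖A‖_F ‖B‖_F`. Bessel's inequality and `Tr ρ² ≤ 1` bound `‖aₜ‖² ≤ d_A - 1`, so
`‖A‖_F² ≤ n x² + d_A - 1`, and likewise for `B`.
-/

section TraceNorm

variable {m k : Type*} [Fintype m] [Fintype k]

lemma norm_toEuclideanLin_sq {ι : Type*} [Fintype ι] [DecidableEq m] (A : Matrix ι m ℂ)
    (x : EuclideanSpace ℂ m) :
    ‖toEuclideanLin A x‖ ^ 2 = ∑ i, ‖inner ℂ (WithLp.toLp 2 (star (A i))) x‖ ^ 2 := by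
  simp [EuclideanSpace.norm_sq_eq, PiLp.inner_apply, mulVec, dotProduct, mul_comm]

lemma sum_norm_toEuclideanLin_sq_le {ι α : Type*} [Fintype ι] [Fintype α] [DecidableEq m]
    (A : Matrix ι m ℂ) {v : α → EuclideanSpace ℂ m} (hv : Orthonormal ℂ v) :
    ∑ a, ‖toEuclideanLin A (v a)‖ ^ 2 ≤ ∑ i, ∑ j, ‖A i j‖ ^ 2 := by
  simp_rw [norm_toEuclideanLin_sq]
  rw [Finset.sum_comm]
  refine Finset.sum_le_sum fun i _ => ?_
  calc ∑ a, ‖inner ℂ (WithLp.toLp 2 (star (A i))) (v a)‖ ^ 2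
      = ∑ a, ‖inner ℂ (v a) (WithLp.toLp 2 (star (A i)))‖ ^ 2 := by simp_rw [norm_inner_symm]
    _ ≤ ‖WithLp.toLp 2 (star (A i))‖ ^ 2 := hv.sum_inner_products_le _
    _ = ∑ j, ‖A i j‖ ^ 2 := by simp [EuclideanSpace.norm_sq_eq]

variable [DecidableEq k]

lemma inner_toEuclideanLin_eigenvectorBasis (M : Matrix m k ℂ) (i j : k) :
    inner ℂ (toEuclideanLin M ((isHermitian_conjTranspose_mul_self M).eigenvectorBasis i))
        (toEuclideanLin M ((isHermitian_conjTranspose_mul_self M).eigenvectorBasis j)) =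
      if i = j then ((isHermitian_conjTranspose_mul_self M).eigenvalues i : ℂ) else 0 := by
  classical
  set hH := isHermitian_conjTranspose_mul_self M
  set v := hH.eigenvectorBasis
  have hMM : toEuclideanLin (Mᴴ * M) (v j) = (hH.eigenvalues j : ℂ) • v j := by
    rw [toLpLin_apply, hH.mulVec_eigenvectorBasis, RCLike.real_smul_eq_coe_smul (K := ℂ)]
    rfl
  rw [← LinearMap.adjoint_inner_right, ← toEuclideanLin_conjTranspose_eq_adjoint,
    ← LinearMap.comp_apply, ← toLpLin_mul, hMM, inner_smul_right,
    orthonormal_iff_ite.mp v.orthonormal]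
  split_ifs with h <;> simp [h]

lemma orthonormal_leftSingularVectors (M : Matrix m k ℂ) :
    letI hH := isHermitian_conjTranspose_mul_self M
    Orthonormal ℂ fun i : {i // hH.eigenvalues i ≠ 0} =>
      ((√(hH.eigenvalues i) : ℂ)⁻¹) • toEuclideanLin M (hH.eigenvectorBasis i) := by
  rw [orthonormal_iff_ite]
  rintro ⟨i, hi⟩ ⟨j, hj⟩
  simp only [inner_smul_left, inner_smul_right, inner_toEuclideanLin_eigenvectorBasis,
    Subtype.mk.injEq]
  by_cases h : i = j
  · subst h
    have hnonneg := eigenvalues_conjTranspose_mul_self_nonneg M i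
    have hσ : (√((isHermitian_conjTranspose_mul_self M).eigenvalues i) : ℂ) ≠ 0 := by
      exact_mod_cast (Real.sqrt_pos.mpr (hnonneg.lt_of_ne' hi)).ne'
    have hσσ : (((isHermitian_conjTranspose_mul_self M).eigenvalues i : ℝ) : ℂ) =
        √((isHermitian_conjTranspose_mul_self M).eigenvalues i) *
          √((isHermitian_conjTranspose_mul_self M).eigenvalues i) := by
      exact_mod_cast (Real.mul_self_sqrt hnonneg).symm
    rw [if_pos rfl, if_pos rfl, hσσ]
    simp only [map_inv₀, Complex.conj_ofReal]
    field_simp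
  · simp [h]

/-- With singular value decomposition `Aᴴ B = Σ σᵢ uᵢ vᵢᴴ`, each `σᵢ = ⟪A uᵢ, B vᵢ⟫`; then apply
Cauchy–Schwarz and Bessel's inequality for the orthonormal families `uᵢ` and `vᵢ`. -/
lemma traceNorm_conjTranspose_mul_le {ι : Type*} [Fintype ι] (A : Matrix ι m ℂ)
    (B : Matrix ι k ℂ) :
    traceNorm (Aᴴ * B) ≤ √(∑ i, ∑ j, ‖A i j‖ ^ 2) * √(∑ i, ∑ j, ‖B i j‖ ^ 2) := by
  classical
  set M := Aᴴ * B
  set hH := isHermitian_conjTranspose_mul_self M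
  set v := hH.eigenvectorBasis
  set σ : k → ℝ := fun i => √(hH.eigenvalues i)
  -- `u i = 0` whenever `σ i = 0`, since `0⁻¹ = 0`
  set u : k → EuclideanSpace ℂ m := fun i => ((σ i : ℂ)⁻¹) • toEuclideanLin M (v i)
  set S := {i // hH.eigenvalues i ≠ 0}
  have hσ_le : ∀ i, σ i ≤ ‖toEuclideanLin A (u i)‖ * ‖toEuclideanLin B (v i)‖ := by
    intro i
    have hσσ : ((hH.eigenvalues i : ℝ) : ℂ) = σ i * σ i := by
      exact_mod_cast (Real.mul_self_sqrt (eigenvalues_conjTranspose_mul_self_nonneg M i)).symm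
    have h : inner ℂ (u i) (toEuclideanLin M (v i)) = σ i := by
      simp only [u, inner_smul_left, v, inner_toEuclideanLin_eigenvectorBasis]
      rw [hσσ]
      by_cases hi : σ i = 0 <;> simp [hi]
    calc σ i = ‖inner ℂ (toEuclideanLin A (u i)) (toEuclideanLin B (v i))‖ := by
          rw [← LinearMap.adjoint_inner_right, ← toEuclideanLin_conjTranspose_eq_adjoint,
            ← LinearMap.comp_apply, ← toLpLin_mul, h, Complex.norm_real,
            Real.norm_of_nonneg (Real.sqrt_nonneg _)]
      _ ≤ _ := norm_inner_le_norm _ _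
  calc traceNorm M = ∑ i with hH.eigenvalues i ≠ 0, σ i :=
        (Finset.sum_filter_of_ne fun i _ h => by contrapose! h; simp [h]).symm
    _ = ∑ i : S, σ i := Finset.sum_subtype _ (by simp) _
    _ ≤ ∑ i : S, ‖toEuclideanLin A (u i)‖ * ‖toEuclideanLin B (v i)‖ :=
        Finset.sum_le_sum fun i _ => hσ_le i
    _ ≤ √(∑ i : S, ‖toEuclideanLin A (u i)‖ ^ 2) * √(∑ i : S, ‖toEuclideanLin B (v i)‖ ^ 2) :=
        Real.sum_mul_le_sqrt_mul_sqrt _ _ _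
    _ ≤ _ := by
        gcongr
        · exact sum_norm_toEuclideanLin_sq_le A (orthonormal_leftSingularVectors M)
        · exact sum_norm_toEuclideanLin_sq_le B (v.orthonormal.comp _ Subtype.val_injective)

end TraceNorm

section Mixture

variable {τ : Type*} [Fintype τ] (p : τ → ℝ)

lemma traceNorm_sum_smul_vecMulVec_le {m k : Type*} [Fintype m] [Fintype k] [DecidableEq k]
    (hp : ∀ t, 0 ≤ p t) (u : τ → m → ℂ) (v : τ → k → ℂ) :
    traceNorm (∑ t, (p t : ℂ) • vecMulVec (u t) (v t)) ≤
      √(∑ t, p t * ∑ i, ‖u t i‖ ^ 2) * √(∑ t, p t * ∑ j, ‖v t j‖ ^ 2) := by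
  have hsqrt : ∀ t, (√(p t) : ℂ) * √(p t) = p t := fun t => by
    exact_mod_cast Real.mul_self_sqrt (hp t)
  have hfactor : ∑ t, (p t : ℂ) • vecMulVec (u t) (v t) =
      (of fun t i => (√(p t) : ℂ) * star (u t i))ᴴ * of fun t j => (√(p t) : ℂ) * v t j := by
    ext i j
    simp only [Matrix.sum_apply, Matrix.smul_apply, vecMulVec_apply, mul_apply,
      conjTranspose_apply, of_apply, star_mul', Complex.star_def, Complex.conj_conj,
      Complex.conj_ofReal, smul_eq_mul]
    refine Finset.sum_congr rfl fun t _ => ?_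
    rw [← hsqrt]
    ring
  rw [hfactor]
  refine (traceNorm_conjTranspose_mul_le _ _).trans_eq ?_
  simp only [of_apply, norm_mul, norm_star, mul_pow, Complex.norm_real,
    Real.norm_of_nonneg (Real.sqrt_nonneg _), Real.sq_sqrt (hp _), Finset.mul_sum]

lemma sum_mul_sum_norm_sq_sum_elim_le {ι : Type*} [Fintype ι] (hp : ∀ t, 0 ≤ p t)
    (hp1 : ∑ t, p t = 1) (n : ℕ) (c : ℝ) (a : τ → ι → ℂ) {α : ℝ}
    (ha : ∀ t, ∑ i, ‖a t i‖ ^ 2 ≤ α) :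
    ∑ t, p t * ∑ i, ‖Sum.elim (fun _ : Fin n => (c : ℂ)) (a t) i‖ ^ 2 ≤ n * c ^ 2 + α :=
  calc ∑ t, p t * ∑ i, ‖Sum.elim (fun _ : Fin n => (c : ℂ)) (a t) i‖ ^ 2
      = ∑ t, p t * (n * c ^ 2 + ∑ i, ‖a t i‖ ^ 2) := by
        simp [Fintype.sum_sum_type, Complex.norm_real]
    _ ≤ ∑ t, p t * (n * c ^ 2 + α) :=
        Finset.sum_le_sum fun t _ => mul_le_mul_of_nonneg_left (by linarith [ha t]) (hp t)
    _ = n * c ^ 2 + α := by rw [← Finset.sum_mul, hp1, one_mul]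

variable {ι κ : Type*} (a : τ → ι → ℂ) (b : τ → κ → ℂ) {r : ι → ℂ} {s : κ → ℂ}
  {T : Matrix ι κ ℂ}

lemma fromBlocks_eq_sum_smul_vecMulVec (hp1 : ∑ t, p t = 1)
    (hr : ∀ i, r i = ∑ t, (p t : ℂ) * a t i) (hs : ∀ j, s j = ∑ t, (p t : ℂ) * b t j)
    (hT : ∀ i j, T i j = ∑ t, (p t : ℂ) * (a t i * b t j)) (x y : ℝ) (n : ℕ) :
    fromBlocks (of fun (_ : Fin n) (_ : Fin n) => ((x * y : ℝ) : ℂ))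
        (of fun (_ : Fin n) j => (x : ℂ) * s j) (of fun i (_ : Fin n) => (y : ℂ) * r i) T =
      ∑ t, (p t : ℂ) • vecMulVec (Sum.elim (fun _ : Fin n => (x : ℂ)) (a t))
        (Sum.elim (fun _ : Fin n => (y : ℂ)) (b t)) := by
  have hp1' : ∑ t, (p t : ℂ) = 1 := by exact_mod_cast hp1
  ext (c | i) (c' | j) <;>
    simp only [fromBlocks_apply₁₁, fromBlocks_apply₁₂, fromBlocks_apply₂₁, fromBlocks_apply₂₂,
      of_apply, Matrix.sum_apply, Matrix.smul_apply, vecMulVec_apply, Sum.elim_inl, Sum.elim_inr,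
      smul_eq_mul, hr, hs, hT, Finset.mul_sum]
  · rw [← Finset.sum_mul, hp1']; push_cast; ring
  all_goals exact Finset.sum_congr rfl fun t _ => by ring

theorem traceNorm_fromBlocks_le_of_mixture [Fintype ι] [Fintype κ] [DecidableEq ι]
    [DecidableEq κ] (hp : ∀ t, 0 ≤ p t) (hp1 : ∑ t, p t = 1)
    (hr : ∀ i, r i = ∑ t, (p t : ℂ) * a t i) (hs : ∀ j, s j = ∑ t, (p t : ℂ) * b t j)
    (hT : ∀ i j, T i j = ∑ t, (p t : ℂ) * (a t i * b t j)) {α β : ℝ}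
    (ha : ∀ t, ∑ i, ‖a t i‖ ^ 2 ≤ α) (hb : ∀ t, ∑ j, ‖b t j‖ ^ 2 ≤ β) (x y : ℝ) (n : ℕ) :
    traceNorm (fromBlocks (of fun (_ : Fin n) (_ : Fin n) => ((x * y : ℝ) : ℂ))
        (of fun (_ : Fin n) j => (x : ℂ) * s j) (of fun i (_ : Fin n) => (y : ℂ) * r i) T) ≤
      √((n * x ^ 2 + α) * (n * y ^ 2 + β)) := by
  have hA := sum_mul_sum_norm_sq_sum_elim_le p hp hp1 n x a ha
  have hB := sum_mul_sum_norm_sq_sum_elim_le p hp hp1 n y b hb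
  have hB0 : 0 ≤ n * y ^ 2 + β :=
    (Finset.sum_nonneg fun t _ => mul_nonneg (hp t) (by positivity)).trans hB
  rw [fromBlocks_eq_sum_smul_vecMulVec p a b hp1 hr hs hT, Real.sqrt_mul' _ hB0]
  exact (traceNorm_sum_smul_vecMulVec_le p hp _ _).trans (by gcongr)

end Mixture

section Bessel

variable {m n : Type*}

lemma Matrix.PosSemidef.norm_apply_sq_le {A : Matrix m m ℂ} (hA : A.PosSemidef) (i j : m) :
    ‖A i j‖ ^ 2 ≤ (A i i).re * (A j j).re := by
  have hdet := (hA.submatrix ![i, j]).det_nonneg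
  rw [det_fin_two] at hdet
  simp only [submatrix_apply, Matrix.cons_val_zero, Matrix.cons_val_one] at hdet
  rw [← hA.1.coe_re_apply_self i, ← hA.1.coe_re_apply_self j, ← hA.1.apply i j,
    Complex.star_def, Complex.conj_mul'] at hdet
  rw [← hA.1.apply i j, norm_star]
  have : (0 : ℂ) ≤ (((A i i).re * (A j j).re - ‖A j i‖ ^ 2 : ℝ) : ℂ) := by
    push_cast; exact hdet
  exact sub_nonneg.mp (Complex.zero_le_real.mp this)

variable [Fintype m] [Fintype n]

lemma IsDensityMatrix.sum_norm_sq_le_one [DecidableEq m] {ρ : Matrix m m ℂ}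
    (hρ : IsDensityMatrix ρ) : ∑ i, ∑ j, ‖ρ i j‖ ^ 2 ≤ 1 := by
  have htr : ∑ i, (ρ i i).re = 1 := by
    simpa [trace, Complex.ext_iff] using congrArg Complex.re hρ.2
  calc ∑ i, ∑ j, ‖ρ i j‖ ^ 2 ≤ ∑ i, ∑ j, (ρ i i).re * (ρ j j).re :=
        Finset.sum_le_sum fun i _ => Finset.sum_le_sum fun j _ => hρ.1.norm_apply_sq_le i j
    _ = 1 := by rw [← Finset.sum_mul_sum, htr, one_mul]

lemma inner_toLp_uncurry (X Y : Matrix m n ℂ) :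
    inner ℂ (WithLp.toLp 2 (Function.uncurry X)) (WithLp.toLp 2 (Function.uncurry Y)) =
      (Y * Xᴴ).trace := by
  simp only [PiLp.inner_apply, RCLike.inner_apply, Fintype.sum_prod_type, trace, diag_apply,
    mul_apply, conjTranspose_apply, RCLike.star_def]
  rfl

lemma sum_norm_trace_mul_conjTranspose_sq_le {α : Type*} [Fintype α] [DecidableEq α]
    (F : α → Matrix m n ℂ) {w : ℝ} (hw : 0 < w)
    (hF : ∀ a c, (F a * (F c)ᴴ).trace = if a = c then (w : ℂ) else 0) (X : Matrix m n ℂ) :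
    ∑ a, ‖(X * (F a)ᴴ).trace‖ ^ 2 ≤ w * ∑ i, ∑ j, ‖X i j‖ ^ 2 := by
  set v : α → EuclideanSpace ℂ (m × n) :=
    fun a => ((√w : ℂ)⁻¹) • WithLp.toLp 2 (Function.uncurry (F a))
  have hsqrt : (√w : ℂ) ^ 2 = w := by exact_mod_cast Real.sq_sqrt hw.le
  have hsqrt0 : (√w : ℂ) ≠ 0 := by exact_mod_cast (Real.sqrt_pos.mpr hw).ne'
  have hv : Orthonormal ℂ v := by
    rw [orthonormal_iff_ite]
    intro a c
    simp only [v, inner_smul_left, inner_smul_right, inner_toLp_uncurry, hF, eq_comm (a := c)]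
    split_ifs
    · simp only [map_inv₀, Complex.conj_ofReal, ← hsqrt]; field_simp
    · simp
  have hbessel := hv.sum_inner_products_le (s := .univ) (WithLp.toLp 2 (Function.uncurry X))
  have hnorm : ‖(starRingEnd ℂ) (√w : ℂ)⁻¹‖ ^ 2 = w⁻¹ := by
    rw [RCLike.norm_conj, norm_inv, Complex.norm_real, Real.norm_of_nonneg (Real.sqrt_nonneg _),
      inv_pow, Real.sq_sqrt hw.le]
  simp only [v, inner_smul_left, inner_toLp_uncurry, norm_mul, mul_pow,
    EuclideanSpace.norm_sq_eq] at hbessel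
  rw [← Finset.mul_sum, hnorm, Fintype.sum_prod_type] at hbessel
  exact (inv_mul_le_iff₀ hw).mp hbessel

end Bessel

section BlochExpansion

variable {m n ι κ : Type*} [DecidableEq m] [DecidableEq n] [Fintype ι] [Fintype κ]

def withIdentity (G : ι → Matrix m m ℂ) : Option ι → Matrix m m ℂ
  | none => 1
  | some i => G i

def blochCoeff (r : ι → ℂ) (s : κ → ℂ) (T : Matrix ι κ ℂ) : Option ι → Option κ → ℂ
  | none, none => 1
  | some i, none => r i
  | none, some j => s j
  | some i, some j => T i j

lemma sum_blochCoeff_smul_kronecker (G : ι → Matrix m m ℂ) (H : κ → Matrix n n ℂ)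
    (r : ι → ℂ) (s : κ → ℂ) (T : Matrix ι κ ℂ) :
    ∑ c, ∑ e, blochCoeff r s T c e • (withIdentity G c ⊗ₖ withIdentity H e) =
      1 + ∑ i, r i • (G i ⊗ₖ 1) + ∑ j, s j • (1 ⊗ₖ H j) + ∑ i, ∑ j, T i j • (G i ⊗ₖ H j) := by
  simp only [Fintype.sum_option, blochCoeff, withIdentity, one_kronecker_one, one_smul,
    Finset.sum_add_distrib]
  abel

variable [Fintype m] [Fintype n]

lemma trace_sum_smul_kronecker_mul_conjTranspose {α β : Type*} [Fintype α] [Fintype β]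
    [DecidableEq α] [DecidableEq β] {F : α → Matrix m m ℂ} {F' : β → Matrix n n ℂ} {w w' : ℂ}
    (hF : ∀ a c, (F a * (F c)ᴴ).trace = if a = c then w else 0)
    (hF' : ∀ b e, (F' b * (F' e)ᴴ).trace = if b = e then w' else 0) (C : α → β → ℂ)
    (c : α) (e : β) :
    ((∑ a, ∑ b, C a b • (F a ⊗ₖ F' b)) * ((F c)ᴴ ⊗ₖ (F' e)ᴴ)).trace = w * w' * C c e := by
  simp only [Finset.sum_mul, trace_sum, smul_mul_assoc, trace_smul, ← mul_kronecker_mul,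
    trace_kronecker, hF, hF', smul_eq_mul, ite_mul, mul_ite, zero_mul, mul_zero,
    Finset.sum_ite_eq', Finset.mem_univ, if_true]
  ring

lemma trace_sum_smul_kronecker_mul_kronecker {τ : Type*} [Fintype τ] (p : τ → ℂ)
    (A : τ → Matrix m m ℂ) (B : τ → Matrix n n ℂ) (X : Matrix m m ℂ) (Y : Matrix n n ℂ) :
    ((∑ t, p t • (A t ⊗ₖ B t)) * (X ⊗ₖ Y)).trace =
      ∑ t, p t * ((A t * X).trace * (B t * Y).trace) := by
  simp only [Finset.sum_mul, trace_sum, smul_mul_assoc, trace_smul, ← mul_kronecker_mul,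
    trace_kronecker, smul_eq_mul]

variable [DecidableEq ι] [DecidableEq κ]

lemma blochCoeff_eq_of_separable {τ : Type*} [Fintype τ] {G : ι → Matrix m m ℂ}
    {H : κ → Matrix n n ℂ} {w w' : ℂ} (hw : w ≠ 0) (hw' : w' ≠ 0)
    (hG : ∀ c c', (withIdentity G c * (withIdentity G c')ᴴ).trace = if c = c' then w else 0)
    (hH : ∀ e e', (withIdentity H e * (withIdentity H e')ᴴ).trace = if e = e' then w' else 0)
    {ρ : Matrix (m × n) (m × n) ℂ} {r : ι → ℂ} {s : κ → ℂ} {T : Matrix ι κ ℂ}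
    (hexp : ρ = (w * w')⁻¹ • (1 + ∑ i, r i • (G i ⊗ₖ 1) + ∑ j, s j • (1 ⊗ₖ H j)
      + ∑ i, ∑ j, T i j • (G i ⊗ₖ H j)))
    {p : τ → ℂ} {ρA : τ → Matrix m m ℂ} {ρB : τ → Matrix n n ℂ}
    (hsep : ρ = ∑ t, p t • (ρA t ⊗ₖ ρB t)) (c : Option ι) (e : Option κ) :
    blochCoeff r s T c e = ∑ t, p t *
      ((ρA t * (withIdentity G c)ᴴ).trace * (ρB t * (withIdentity H e)ᴴ).trace) := by
  have h := congrArg (fun X => (X * ((withIdentity G c)ᴴ ⊗ₖ (withIdentity H e)ᴴ)).trace)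
    (hexp.symm.trans hsep)
  simp only [← sum_blochCoeff_smul_kronecker, smul_mul_assoc, trace_smul, smul_eq_mul,
    trace_sum_smul_kronecker_mul_conjTranspose hG hH,
    trace_sum_smul_kronecker_mul_kronecker] at h
  rw [← h]
  field_simp

lemma IsDensityMatrix.sum_norm_trace_mul_conjTranspose_sq_le_sub_one {G : ι → Matrix m m ℂ} {w : ℝ}
    (hw : 0 < w)
    (hG : ∀ c c', (withIdentity G c * (withIdentity G c')ᴴ).trace = if c = c' then (w : ℂ) else 0)
    {ρ : Matrix m m ℂ} (hρ : IsDensityMatrix ρ) :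
    ∑ i, ‖(ρ * (G i)ᴴ).trace‖ ^ 2 ≤ w - 1 := by
  have h := sum_norm_trace_mul_conjTranspose_sq_le (withIdentity G) hw hG ρ
  simp only [Fintype.sum_option, withIdentity, conjTranspose_one, mul_one, hρ.2, norm_one,
    one_pow] at h
  nlinarith [hρ.sum_norm_sq_le_one]

end BlochExpansion

section HeisenbergWeyl

open Complex

noncomputable def heisenbergWeylFamily (d : ℕ) (i : HWIdx d) : Matrix (Fin d) (Fin d) ℂ :=
  heisenbergWeyl d i.1.1 i.1.2

variable {d : ℕ}

lemma heisenbergWeyl_zero_zero : heisenbergWeyl d 0 0 = 1 := by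
  ext i j
  simp [heisenbergWeyl, one_apply, Nat.mod_eq_of_lt i.isLt, Fin.ext_iff, eq_comm]

lemma heisenbergWeyl_apply (l m i j : Fin d) :
    heisenbergWeyl d l m i j =
      if j = i + m then exp (2 * Real.pi * I * (i : ℕ) * (l : ℕ) / d) else 0 := by
  simp [heisenbergWeyl, Fin.ext_iff, Fin.val_add]

variable [NeZero d]

lemma sum_exp_mul_conj_exp (l l' : Fin d) :
    ∑ k : Fin d, exp (2 * Real.pi * I * (k : ℕ) * (l : ℕ) / d) *
        (starRingEnd ℂ) (exp (2 * Real.pi * I * (k : ℕ) * (l' : ℕ) / d)) =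
      if l = l' then (d : ℂ) else 0 := by
  have hζ := isPrimitiveRoot_exp d (NeZero.ne d)
  set z := exp (2 * Real.pi * I / d) ^ ((l : ℤ) - (l' : ℤ))
  have hterm : ∀ k : Fin d, exp (2 * Real.pi * I * (k : ℕ) * (l : ℕ) / d) *
      (starRingEnd ℂ) (exp (2 * Real.pi * I * (k : ℕ) * (l' : ℕ) / d)) = z ^ (k : ℕ) := by
    intro k
    rw [← exp_conj, ← exp_add, ← zpow_natCast, ← _root_.zpow_mul, ← exp_int_mul]
    congr 1
    simp only [map_div₀, map_mul, map_ofNat, conj_ofReal, conj_I, map_natCast, Int.cast_mul,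
      Int.cast_sub, Int.cast_natCast]
    ring
  have hzd : z ^ d = 1 := by
    rw [← zpow_natCast, ← _root_.zpow_mul, mul_comm _ (d : ℤ), _root_.zpow_mul, zpow_natCast,
      hζ.pow_eq_one, _root_.one_zpow]
  have hz : z = 1 ↔ l = l' := by
    rw [hζ.zpow_eq_one_iff_dvd, ← Fin.val_inj]
    constructor
    · intro h
      have := Int.eq_zero_of_abs_lt_dvd h (by rw [abs_lt]; omega)
      omega
    · intro h; simp [h]
  rw [Finset.sum_congr rfl fun k _ => hterm k, Fin.sum_univ_eq_sum_range (z ^ ·)]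
  split_ifs with h
  · simp [hz.mpr h]
  · have hz1 : z - 1 ≠ 0 := sub_ne_zero.mpr (mt hz.mp h)
    rw [← mul_left_inj' hz1, geom_sum_mul, hzd, sub_self, zero_mul]

lemma trace_heisenbergWeyl_mul_conjTranspose (p q : Fin d × Fin d) :
    (heisenbergWeyl d p.1 p.2 * (heisenbergWeyl d q.1 q.2)ᴴ).trace =
      if p = q then (d : ℂ) else 0 := by
  simp only [trace, diag_apply, mul_apply, conjTranspose_apply, heisenbergWeyl_apply,
    ite_mul, zero_mul, Finset.sum_ite_eq', Finset.mem_univ, if_true, add_right_inj]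
  by_cases hm : p.2 = q.2
  · simp [hm, sum_exp_mul_conj_exp, Prod.ext_iff]
  · simp [hm, Prod.ext_iff]

def heisenbergWeylIndex : Option (HWIdx d) → Fin d × Fin d
  | none => 0
  | some i => i.1

lemma HWIdx.val_ne_zero (i : HWIdx d) : i.1 ≠ 0 := fun h => by simpa [h] using i.2

lemma heisenbergWeylIndex_injective : Function.Injective (heisenbergWeylIndex (d := d)) := by
  rintro (_ | i) (_ | j) h
  · rfl
  · exact absurd h.symm j.val_ne_zero
  · exact absurd h i.val_ne_zero
  · exact congrArg some (Subtype.ext h)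

lemma withIdentity_heisenbergWeylFamily (c : Option (HWIdx d)) :
    withIdentity (heisenbergWeylFamily d) c =
      heisenbergWeyl d (heisenbergWeylIndex c).1 (heisenbergWeylIndex c).2 := by
  cases c <;>
    simp [withIdentity, heisenbergWeylIndex, heisenbergWeylFamily, heisenbergWeyl_zero_zero]

lemma trace_withIdentity_heisenbergWeylFamily_mul_conjTranspose (c c' : Option (HWIdx d)) :
    (withIdentity (heisenbergWeylFamily d) c * (withIdentity (heisenbergWeylFamily d) c')ᴴ).trace =
      if c = c' then (d : ℂ) else 0 := by
  simp only [withIdentity_heisenbergWeylFamily, trace_heisenbergWeyl_mul_conjTranspose,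
    heisenbergWeylIndex_injective.eq_iff]

lemma IsDensityMatrix.sum_norm_trace_mul_heisenbergWeylFamily_sq_le {ρ : Matrix (Fin d) (Fin d) ℂ}
    (hρ : IsDensityMatrix ρ) :
    ∑ i, ‖(ρ * (heisenbergWeylFamily d i)ᴴ).trace‖ ^ 2 ≤ d - 1 :=
  hρ.sum_norm_trace_mul_conjTranspose_sq_le_sub_one (Nat.cast_pos.mpr (NeZero.pos d))
    fun c c' => by rw [trace_withIdentity_heisenbergWeylFamily_mul_conjTranspose,
      Complex.ofReal_natCast]

end HeisenbergWeyl

theorem traceNorm_normExtCorrTensor_le_of_separable_heisenbergWeyl_general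
    (dA dB : ℕ) (hdA : 2 ≤ dA) (hdB : 2 ≤ dB)
    (ρ : Matrix (Fin dA × Fin dB) (Fin dA × Fin dB) ℂ)
    (hsep : IsSeparableState dA dB ρ)
    (r : HWIdx dA → ℂ) (s : HWIdx dB → ℂ)
    (T : Matrix (HWIdx dA) (HWIdx dB) ℂ)
    (hexp : ρ = ((dA * dB : ℂ))⁻¹ •
      ((1 : Matrix (Fin dA × Fin dB) (Fin dA × Fin dB) ℂ)
        + ∑ i : HWIdx dA, r i •
            (heisenbergWeyl dA i.1.1 i.1.2 ⊗ₖ (1 : Matrix (Fin dB) (Fin dB) ℂ))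
        + ∑ j : HWIdx dB, s j •
            ((1 : Matrix (Fin dA) (Fin dA) ℂ) ⊗ₖ heisenbergWeyl dB j.1.1 j.1.2)
        + ∑ i : HWIdx dA, ∑ j : HWIdx dB, T i j •
            (heisenbergWeyl dA i.1.1 i.1.2 ⊗ₖ heisenbergWeyl dB j.1.1 j.1.2)))
    (x y : ℝ) (n : ℕ) :
    traceNorm (Matrix.fromBlocks
      (Matrix.of fun (_ : Fin n) (_ : Fin n) => ((x * y : ℝ) : ℂ))
      (Matrix.of fun (_ : Fin n) (j : HWIdx dB) => ((x : ℝ) : ℂ) * s j)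
      (Matrix.of fun (i : HWIdx dA) (_ : Fin n) => ((y : ℝ) : ℂ) * r i)
      T) ≤
      Real.sqrt ((n * x ^ 2 + (dA : ℝ) - 1) * (n * y ^ 2 + (dB : ℝ) - 1)) := by
  obtain ⟨N, p, ρA, ρB, hp, hp1, hρA, hρB, hsep⟩ := hsep
  have : NeZero dA := ⟨by omega⟩
  have : NeZero dB := ⟨by omega⟩
  set a := fun t i => (ρA t * (heisenbergWeylFamily dA i)ᴴ).trace
  set b := fun t j => (ρB t * (heisenbergWeylFamily dB j)ᴴ).trace
  have hcoeff := blochCoeff_eq_of_separable (NeZero.ne (dA : ℂ)) (NeZero.ne (dB : ℂ))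
    trace_withIdentity_heisenbergWeylFamily_mul_conjTranspose
    trace_withIdentity_heisenbergWeylFamily_mul_conjTranspose hexp (p := fun t => (p t : ℂ)) hsep
  have hr : ∀ i, r i = ∑ t, (p t : ℂ) * a t i := fun i => by
    simpa [withIdentity, blochCoeff, (hρB _).2] using hcoeff (some i) none
  have hs : ∀ j, s j = ∑ t, (p t : ℂ) * b t j := fun j => by
    simpa [withIdentity, blochCoeff, (hρA _).2] using hcoeff none (some j)
  have hT : ∀ i j, T i j = ∑ t, (p t : ℂ) * (a t i * b t j) := fun i j =>
    hcoeff (some i) (some j)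
  simpa only [add_sub_assoc] using traceNorm_fromBlocks_le_of_mixture p a b hp hp1 hr hs hT
    (fun t => (hρA t).sum_norm_trace_mul_heisenbergWeylFamily_sq_le)
    (fun t => (hρB t).sum_norm_trace_mul_heisenbergWeylFamily_sq_le) x y n

/-- **Heisenberg–Weyl criterion** (`κ_A = d_A`, `κ_B = d_B`): for a separable state,
`‖M̂_{x,y}^{(n)}‖_tr ≤ √((n x² + d_A − 1)(n y² + d_B − 1))`, where the Bloch decomposition is
taken with respect to the non-identity Heisenberg–Weyl operators. -/
theorem traceNorm_normExtCorrTensor_le_of_separable_heisenbergWeyl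
    (dA dB : ℕ) (hdA : 2 ≤ dA) (hdB : 2 ≤ dB)
    (ρ : Matrix (Fin dA × Fin dB) (Fin dA × Fin dB) ℂ)
    (hρ : IsDensityMatrix ρ)
    (hsep : IsSeparableState dA dB ρ)
    (r : HWIdx dA → ℂ) (s : HWIdx dB → ℂ)
    (T : Matrix (HWIdx dA) (HWIdx dB) ℂ)
    (hexp : ρ = ((dA * dB : ℂ))⁻¹ •
      ((1 : Matrix (Fin dA × Fin dB) (Fin dA × Fin dB) ℂ)
        + ∑ i : HWIdx dA, r i •
            (heisenbergWeyl dA i.1.1 i.1.2 ⊗ₖ (1 : Matrix (Fin dB) (Fin dB) ℂ))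
        + ∑ j : HWIdx dB, s j •
            ((1 : Matrix (Fin dA) (Fin dA) ℂ) ⊗ₖ heisenbergWeyl dB j.1.1 j.1.2)
        + ∑ i : HWIdx dA, ∑ j : HWIdx dB, T i j •
            (heisenbergWeyl dA i.1.1 i.1.2 ⊗ₖ heisenbergWeyl dB j.1.1 j.1.2)))
    (x y : ℝ) (hx : 0 ≤ x) (hy : 0 ≤ y) (n : ℕ) (hn : 0 < n) :
    traceNorm (Matrix.fromBlocks
      (Matrix.of fun (_ : Fin n) (_ : Fin n) => ((x * y : ℝ) : ℂ))
      (Matrix.of fun (_ : Fin n) (j : HWIdx dB) => ((x : ℝ) : ℂ) * s j)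
      (Matrix.of fun (i : HWIdx dA) (_ : Fin n) => ((y : ℝ) : ℂ) * r i)
      T) ≤
      Real.sqrt ((n * x ^ 2 + (dA : ℝ) - 1) * (n * y ^ 2 + (dB : ℝ) - 1)) :=
  traceNorm_normExtCorrTensor_le_of_separable_heisenbergWeyl_general dA dB hdA hdB ρ hsep r s T hexp
    x y n
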